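/- For n ≥ 8, N(n) ≤ (1/6)n(n−1)(p(n) + 2^{n−2}/n), i.e. 6n·N(n) ≤ n(n−1)(n·p(n) + 2^{n−2}), where N(n) = Σ_{λ⊢n} n(λ). -/

import Mathlib

/-- The descending list of parts of a partition. -/
def Nat.Partition.descParts {n : ℕ} (P : n.Partition) : List ℕ :=
  (P.parts.sort (· ≤ ·)).reverse

/-- `n(λ) = Σ_{i≥1} (i-1)λ_i` for a partition `λ` listed in decreasing order. -/
def Nat.Partition.nval {n : ℕ} (P : n.Partition) : ℕ :=
  (List.zipWith (· * ·) (List.range P.descParts.length) P.descParts).sum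

/-- `N(n) = Σ_{λ ⊢ n} n(λ)`. -/
def Nfun (n : ℕ) : ℕ := ∑ P : Nat.Partition n, P.nval

/-- `p(n)`, the number of partitions of `n`. -/
def pfun (n : ℕ) : ℕ := Fintype.card (Nat.Partition n)

/-!
Write `ℓ(λ)` for the number of parts of `λ`. The parts of `λ` decrease while the weights
`0, 1, 2, …` increase, so Chebyshev's sum inequality gives `2 n(λ) ≤ (ℓ(λ) - 1) n`.
Partitions with at most 7 parts contribute at most `6 p(n)` to `∑_λ (ℓ(λ) - 1)`. Subtracting 1
from every part shows that at most `p(n - k) ≤ 2^(n-k)` partitions have exactly `k` parts, and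
`∑_{k > 7} (k - 1) 2^(n-k) < 2^(n-4)`. Hence `2 N(n) ≤ n (6 p(n) + 2^(n-4))`, which gives the
claim for `n ≥ 19`; the cases `8 ≤ n ≤ 18` are decided by enumerating partitions as decreasing
lists.
-/

open Finset

namespace List

def nval (l : List ℕ) : ℕ := (zipWith (· * ·) (range l.length) l).sum

theorem sum_zipWith_succ_mul : ∀ (r l : List ℕ), l.length ≤ r.length →
    (zipWith (· * ·) (r.map (· + 1)) l).sum = (zipWith (· * ·) r l).sum + l.sum
  | _, [], _ => by simp
  | [], _ :: _, h => by simp at h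
  | x :: r, y :: l, h => by
    simp only [map_cons, zipWith_cons_cons, sum_cons,
      sum_zipWith_succ_mul r l (by simpa using h)]
    ring

theorem nval_cons (a : ℕ) (l : List ℕ) : (a :: l).nval = l.sum + l.nval := by
  simp only [nval, length_cons, range_succ_eq_map, zipWith_cons_cons, sum_cons, zero_mul,
    zero_add]
  exact (sum_zipWith_succ_mul _ _ (by simp)).trans (add_comm _ _)

theorem two_mul_nval_le {l : List ℕ} (hl : l.Pairwise (· ≥ ·)) :
    2 * l.nval ≤ (l.length - 1) * l.sum := by
  induction l with
  | nil => simp [nval]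
  | cons a t ih =>
    obtain ⟨hle, ht⟩ := pairwise_cons.1 hl
    have hsum : t.sum ≤ t.length * a := by simpa using sum_le_card_nsmul t a hle
    rw [nval_cons, length_cons, sum_cons, Nat.add_sub_cancel]
    cases t with
    | nil => simp [nval]
    | cons b s =>
      have := ih ht
      simp only [length_cons, Nat.add_sub_cancel] at this hsum ⊢
      nlinarith

end List

/-- `descLists f n k` lists the partitions of `n` into parts `≤ k` as decreasing lists;
`f ≥ n` is fuel for the recursion. -/
def descLists : ℕ → ℕ → ℕ → List (List ℕ)
  | _, 0, _ => [[]]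
  | 0, _ + 1, _ => []
  | f + 1, n + 1, k => (List.range' 1 (min k (n + 1))).flatMap
      fun i => (descLists f (n + 1 - i) i).map (i :: ·)

theorem mem_descLists {f n k : ℕ} {l : List ℕ} (hf : n ≤ f) :
    l ∈ descLists f n k ↔
      l.sum = n ∧ (∀ x ∈ l, 0 < x ∧ x ≤ k) ∧ l.Pairwise (· ≥ ·) := by
  have mem_zero : ∀ {f k : ℕ} {l : List ℕ}, l ∈ descLists f 0 k ↔
      l.sum = 0 ∧ (∀ x ∈ l, 0 < x ∧ x ≤ k) ∧ l.Pairwise (· ≥ ·) := by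
    intro f k l
    rw [show descLists f 0 k = [[]] by cases f <;> rfl, List.mem_singleton]
    refine ⟨by rintro rfl; simp, fun ⟨hsum, hpos, _⟩ => ?_⟩
    exact List.eq_nil_iff_forall_not_mem.2 fun x hx =>
      (hpos x hx).1.ne' (List.sum_eq_zero_iff.1 hsum x hx)
  induction f generalizing n k l with
  | zero =>
    obtain rfl : n = 0 := by omega
    exact mem_zero
  | succ f ih =>
    rcases n with _ | n
    · exact mem_zero
    simp only [descLists, List.mem_flatMap, List.mem_map, List.mem_range'_1]
    constructor
    · rintro ⟨i, hi, t, ht, rfl⟩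
      obtain ⟨hsum, hbound, hsorted⟩ := (ih (by omega)).1 ht
      refine ⟨by simp [hsum]; omega, ?_,
        List.pairwise_cons.2 ⟨fun x hx => (hbound x hx).2, hsorted⟩⟩
      simp only [List.mem_cons, forall_eq_or_imp]
      exact ⟨by omega, fun x hx => ⟨(hbound x hx).1, by have := (hbound x hx).2; omega⟩⟩
    · rintro ⟨hsum, hbound, hsorted⟩
      obtain _ | ⟨a, t⟩ := l
      · simp at hsum
      simp only [List.sum_cons, List.mem_cons, forall_eq_or_imp, List.pairwise_cons]
        at hsum hbound hsorted
      refine ⟨a, by omega, t, (ih (by omega)).2 ⟨by omega,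
        fun x hx => ⟨(hbound.2 x hx).1, hsorted.1 x hx⟩, hsorted.2⟩, rfl⟩

theorem nodup_descLists (f n k : ℕ) : (descLists f n k).Nodup := by
  induction f generalizing n k with
  | zero => cases n <;> simp [descLists]
  | succ f ih =>
    rcases n with _ | n
    · simp [descLists]
    refine List.nodup_flatMap.2 ⟨fun i _ => (ih _ _).map List.cons_injective, ?_⟩
    refine (List.nodup_range' (step := 1)).imp fun hij l hli hlj => hij ?_
    obtain ⟨t, -, rfl⟩ := List.mem_map.1 hli
    obtain ⟨t', -, h⟩ := List.mem_map.1 hlj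
    exact (List.cons_eq_cons.1 h).1.symm

namespace Nat.Partition

variable {n : ℕ}

theorem coe_descParts (P : n.Partition) : (P.descParts : Multiset ℕ) = P.parts := by
  rw [descParts, Multiset.coe_reverse, Multiset.sort_eq]

theorem descParts_injective : Function.Injective (descParts (n := n)) := fun P Q h =>
  Nat.Partition.ext <| by rw [← coe_descParts, h, coe_descParts]

theorem sum_descParts (P : n.Partition) : P.descParts.sum = n := by
  rw [← Multiset.sum_coe, coe_descParts, P.parts_sum]

theorem length_descParts (P : n.Partition) : P.descParts.length = P.parts.card := by
  rw [← Multiset.coe_card, coe_descParts]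

theorem pairwise_descParts (P : n.Partition) : P.descParts.Pairwise (· ≥ ·) :=
  List.pairwise_reverse.2 (Multiset.pairwise_sort _ _)

theorem two_mul_nval_le (P : n.Partition) : 2 * P.nval ≤ (P.parts.card - 1) * n := by
  have h := List.two_mul_nval_le P.pairwise_descParts
  rwa [length_descParts, sum_descParts] at h

theorem descParts_mem_descLists (P : n.Partition) : P.descParts ∈ descLists n n n := by
  refine (mem_descLists le_rfl).2 ⟨P.sum_descParts, fun x hx => ?_, P.pairwise_descParts⟩
  rw [← Multiset.mem_coe, coe_descParts] at hx
  exact ⟨P.parts_pos hx, le_of_mem_parts hx⟩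

theorem image_descParts_univ :
    (Finset.univ : Finset n.Partition).image descParts = (descLists n n n).toFinset := by
  ext l
  simp only [Finset.mem_image, Finset.mem_univ, true_and, List.mem_toFinset]
  refine ⟨by rintro ⟨P, rfl⟩; exact P.descParts_mem_descLists, fun hl => ?_⟩
  obtain ⟨hsum, hbound, hsorted⟩ := (mem_descLists le_rfl).1 hl
  refine ⟨⟨l, fun hx => (hbound _ hx).1, hsum⟩, ?_⟩
  change (Multiset.sort (l : Multiset ℕ) (· ≤ ·)).reverse = l
  rw [← Multiset.coe_reverse, Multiset.coe_sort,
    List.mergeSort_eq_self (r := (· ≤ ·)) (List.pairwise_reverse.2 hsorted),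
    List.reverse_reverse]

theorem card_eq_length_descLists : Fintype.card n.Partition = (descLists n n n).length := by
  rw [← Finset.card_univ, ← Finset.card_image_of_injective _ descParts_injective,
    image_descParts_univ, List.toFinset_card_of_nodup (nodup_descLists n n n)]

theorem sum_nval_eq_sum_descLists :
    ∑ P : n.Partition, P.nval = ((descLists n n n).map List.nval).sum := by
  rw [← List.sum_toFinset _ (nodup_descLists n n n), ← image_descParts_univ,
    Finset.sum_image descParts_injective.injOn]
  rfl

end Nat.Partition

theorem sum_Icc_sub_one_mul_two_pow_add (L n : ℕ) (h : L ≤ n) :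
    ∑ k ∈ Icc (L + 1) n, (k - 1) * 2 ^ (n - k) + (n + 1) = (L + 1) * 2 ^ (n - L) := by
  induction n, h using Nat.le_induction with
  | base => simp
  | succ n hLn ih =>
    rw [sum_Icc_succ_top (by omega), Nat.sub_self, pow_zero, mul_one,
      show n + 1 - L = n - L + 1 by omega, pow_succ, ← mul_assoc, ← ih, add_mul, sum_mul]
    have : ∀ k ∈ Icc (L + 1) n, (k - 1) * 2 ^ (n + 1 - k) = (k - 1) * 2 ^ (n - k) * 2 := by
      intro k hk
      rw [show n + 1 - k = n - k + 1 by have := (mem_Icc.1 hk).2; omega, pow_succ, mul_assoc]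
    rw [sum_congr rfl this]
    omega

theorem Multiset.eq_of_card_eq_of_filter_ne_zero_eq {M N : Multiset ℕ} (hcard : card M = card N)
    (h : M.filter (· ≠ 0) = N.filter (· ≠ 0)) : M = N := by
  have hzero (K : Multiset ℕ) :
      K.filter (¬ · ≠ 0) = replicate (card (K.filter (¬ · ≠ 0))) 0 :=
    eq_replicate_card.2 fun b hb => not_not.1 (mem_filter.1 hb).2
  have hcard_zero : card (M.filter (¬ · ≠ 0)) = card (N.filter (¬ · ≠ 0)) := by
    have hM := congrArg card (filter_add_not (· ≠ 0) M)
    have hN := congrArg card (filter_add_not (· ≠ 0) N)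
    rw [card_add, h] at hM
    rw [card_add] at hN
    omega
  rw [← filter_add_not (· ≠ 0) M, ← filter_add_not (· ≠ 0) N, h, hzero M, hzero N,
    hcard_zero]

namespace Nat.Partition

theorem card_le_two_pow (m : ℕ) : Fintype.card m.Partition ≤ 2 ^ m :=
  calc Fintype.card m.Partition ≤ Fintype.card (Composition m) :=
        Fintype.card_le_of_surjective _ ofComposition_surj
    _ = 2 ^ (m - 1) := composition_card m
    _ ≤ 2 ^ m := Nat.pow_le_pow_right two_pos (m.sub_le 1)

variable {n : ℕ}

theorem map_sub_one_map_add_one (P : n.Partition) :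
    (P.parts.map (· - 1)).map (· + 1) = P.parts := by
  rw [Multiset.map_map]
  exact (Multiset.map_congr rfl fun x hx => Nat.sub_add_cancel (P.parts_pos hx)).trans
    P.parts.map_id

theorem sum_map_sub_one (P : n.Partition) : (P.parts.map (· - 1)).sum = n - P.parts.card := by
  have h := congrArg Multiset.sum P.map_sub_one_map_add_one
  rw [Multiset.sum_map_add] at h
  simp only [Multiset.map_id', Multiset.map_const', Multiset.sum_replicate, Multiset.card_map,
    smul_eq_mul, mul_one, P.parts_sum] at h
  omega

theorem card_filter_card_parts_eq_le (n k : ℕ) :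
    #{P : n.Partition | P.parts.card = k} ≤ Fintype.card (n - k).Partition :=
  calc #{P : n.Partition | P.parts.card = k}
      ≤ #((univ : Finset (n - k).Partition).image parts) := by
        refine card_le_card_of_injOn (fun P => (P.parts.map (· - 1)).filter (· ≠ 0))
          (fun P hP => ?_) fun P hP Q hQ hPQ => Nat.Partition.ext ?_
        · have hsum : (P.parts.map (· - 1)).sum = n - k := by
            rw [sum_map_sub_one, (mem_filter.1 hP).2]
          exact mem_image.2 ⟨ofSums (n - k) _ hsum, mem_univ _, rfl⟩
        · have hcard : (P.parts.map (· - 1)).card = (Q.parts.map (· - 1)).card := by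
            simp only [Multiset.card_map, (mem_filter.1 hP).2, (mem_filter.1 hQ).2]
          rw [← P.map_sub_one_map_add_one, ← Q.map_sub_one_map_add_one,
            Multiset.eq_of_card_eq_of_filter_ne_zero_eq hcard hPQ]
    _ ≤ Fintype.card (n - k).Partition := Finset.card_image_le.trans_eq Finset.card_univ

theorem card_parts_le (P : n.Partition) : P.parts.card ≤ n := by
  simpa [P.parts_sum] using Multiset.card_nsmul_le_sum (a := 1) fun x hx => P.parts_pos hx

theorem sum_card_parts_sub_one_filter_lt_le (n L : ℕ) (hL : L ≤ n) :
    ∑ P : n.Partition with L < P.parts.card, (P.parts.card - 1) ≤ (L + 1) * 2 ^ (n - L) := by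
  have hmaps : ∀ P ∈ ({P : n.Partition | L < P.parts.card} : Finset _),
      P.parts.card ∈ Icc (L + 1) n :=
    fun P hP => mem_Icc.2 ⟨(mem_filter.1 hP).2, P.card_parts_le⟩
  rw [← sum_fiberwise_of_maps_to hmaps, ← sum_Icc_sub_one_mul_two_pow_add L n hL]
  refine (sum_le_sum fun k _ => ?_).trans (Nat.le_add_right _ _)
  calc ∑ P ∈ {P : n.Partition | L < P.parts.card} with P.parts.card = k, (P.parts.card - 1)
      ≤ ∑ P : n.Partition with P.parts.card = k, (k - 1) := by
        refine (sum_congr rfl fun P hP => ?_).trans_le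
          (sum_le_sum_of_subset (filter_subset_filter _ (subset_univ _)))
        rw [(mem_filter.1 hP).2]
    _ = #{P : n.Partition | P.parts.card = k} * (k - 1) := sum_const_nat fun _ _ => rfl
    _ ≤ (k - 1) * 2 ^ (n - k) := by
        rw [mul_comm]
        exact Nat.mul_le_mul_left _ ((card_filter_card_parts_eq_le n k).trans (card_le_two_pow _))

theorem sum_card_parts_sub_one_le (n L : ℕ) (hL : L ≤ n) :
    ∑ P : n.Partition, (P.parts.card - 1) ≤
      (L - 1) * Fintype.card n.Partition + (L + 1) * 2 ^ (n - L) := by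
  rw [← sum_filter_not_add_sum_filter _ (L < ·.parts.card)]
  refine add_le_add ?_ (sum_card_parts_sub_one_filter_lt_le n L hL)
  calc ∑ P : n.Partition with ¬ L < P.parts.card, (P.parts.card - 1)
      ≤ ∑ P : n.Partition, (L - 1) :=
        (sum_le_sum fun P hP => Nat.sub_le_sub_right (not_lt.1 (mem_filter.1 hP).2) 1).trans
          (sum_le_sum_of_subset (filter_subset _ _))
    _ = (L - 1) * Fintype.card n.Partition := by simp [mul_comm]

end Nat.Partition

/-- For `n ≥ 8`, `N(n) ≤ (1/6)n(n-1)(p(n) + 2^(n-2)/n)`, i.e.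
`6n·N(n) ≤ n(n-1)(n·p(n) + 2^(n-2))`. -/
theorem Nfun_le_second (n : ℕ) (hn : 8 ≤ n) :
    6 * n * Nfun n ≤ n * (n - 1) * (n * pfun n + 2 ^ (n - 2)) := by
  rcases lt_or_ge n 19 with hsmall | hlarge
  · rw [Nfun, pfun, Nat.Partition.sum_nval_eq_sum_descLists,
      Nat.Partition.card_eq_length_descLists]
    interval_cases n <;> decide +kernel
  have hN : 2 * Nfun n ≤ n * ∑ P : n.Partition, (P.parts.card - 1) := by
    rw [Nfun, mul_sum, mul_sum]
    exact sum_le_sum fun P _ => (P.two_mul_nval_le).trans_eq (mul_comm _ _)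
  have hS := Nat.Partition.sum_card_parts_sub_one_le n 7 (by omega)
  have hpow : 2 ^ (n - 2) = 32 * 2 ^ (n - 7) := by
    rw [show n - 2 = n - 7 + 5 by omega, pow_add]; ring
  calc 6 * n * Nfun n = 3 * n * (2 * Nfun n) := by ring
    _ ≤ 3 * n * (n * (6 * pfun n + 8 * 2 ^ (n - 7))) :=
        Nat.mul_le_mul_left _ (hN.trans (Nat.mul_le_mul_left _ (by simpa [pfun] using hS)))
    _ = n * (18 * n * pfun n + 24 * n * 2 ^ (n - 7)) := by ring
    _ ≤ n * ((n - 1) * n * pfun n + 32 * (n - 1) * 2 ^ (n - 7)) :=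
        Nat.mul_le_mul_left _ (add_le_add
          (Nat.mul_le_mul_right _ (Nat.mul_le_mul_right _ (by omega)))
          (Nat.mul_le_mul_right _ (by omega)))
    _ = n * (n - 1) * (n * pfun n + 2 ^ (n - 2)) := by rw [hpow]; ring
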